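/- arXiv:2212.03006 — 8 statements merged into one kernel-verified Lean document; each statement's English description precedes it below -/
import Mathlib

section
/- Let d ≥ 1 be an integer, R a commutative ring, a ∈ R with a^{d+1} = 1, and μ, λ ∈ R. Define the d×d matrix X over R with rows and columns labelled by i, j ∈ {1, …, d} by X i j = (if i = j then −μ else λ) + (if i + j = d+1 then a^i else 0). Then for every row index i ∈ {1, …, d}: ∑_{j=1}^{d} X i j · (a^j + μ + λ) = (μ + λ)·((d−1)·λ − μ) + 1 + λ·s, where s = ∑_{k=1}^{d} a^k. (Equivalently, the block-linear system X·v = x·(1,…,1)ᵗ is solved by v = (a^i + μ + λ)_{i=1}^{d}, with x = (μ+λ)((d−1)λ−μ) + 1 + λs.) -/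
/-!
The diagonal and off-diagonal part of `X` is `λ J - (μ + λ) I`, with `J` the all-ones matrix, so
against `v j = a^j + μ + λ` it contributes `λ (s + d (μ + λ)) - (μ + λ) v i`. The anti-diagonal
entry of row `i` sits in column `d + 1 - i` and contributes `a^i (a^(d+1-i) + μ + λ)`, where
`a^i a^(d+1-i) = a^(d+1) = 1`; the terms in `a^i` cancel against those of `-(μ + λ) v i`.
-/

open Finset

theorem Fin.val_add_one_add_val_add_one_eq_iff {n : ℕ} (i j : Fin n) :
    (i.val + 1) + (j.val + 1) = n + 1 ↔ j = i.rev := by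
  rw [Fin.ext_iff, Fin.val_rev]
  omega

theorem Fin.sum_univ_val_add_one_eq_sum_Icc {M : Type*} [AddCommMonoid M] (f : ℕ → M) (n : ℕ) :
    ∑ j : Fin n, f (j.val + 1) = ∑ k ∈ Icc 1 n, f k := by
  rw [Fin.sum_univ_eq_sum_range (fun k => f (k + 1)), range_eq_Ico, sum_Ico_add', zero_add,
    Ico_add_one_right_eq_Icc]

theorem sum_ite_diag_add_ite_antidiag_mul {R : Type*} [CommRing R] {n : ℕ} (c l : R)
    (w v : Fin n → R) (i : Fin n) :
    ∑ j, ((if i = j then c else l) + (if j = i.rev then w i else 0)) * v j =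
      l * ∑ j, v j + (c - l) * v i + w i * v i.rev := by
  have split_entry : ∀ j, ((if i = j then c else l) + (if j = i.rev then w i else 0)) * v j =
      l * v j + (if i = j then (c - l) * v j else 0) + (if j = i.rev then w i * v j else 0) := by
    intro j
    split_ifs <;> ring
  simp only [split_entry, sum_add_distrib, mul_sum, sum_ite_eq, sum_ite_eq', mem_univ, if_true]

theorem row_sum_X_system_general (d : ℕ) (R : Type*) [CommRing R]
    (a : R) (ha : a ^ (d + 1) = 1) (μ lam : R)
    (X : Matrix (Fin d) (Fin d) R)
    (hX : ∀ i j : Fin d, X i j =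
      (if i = j then -μ else lam) +
      (if (i.val + 1) + (j.val + 1) = d + 1 then a ^ (i.val + 1) else 0))
    (s : R) (hs : s = ∑ k ∈ Finset.Icc 1 d, a ^ k) :
    ∀ i : Fin d, ∑ j : Fin d, X i j * (a ^ (j.val + 1) + μ + lam) =
      (μ + lam) * (((d : R) - 1) * lam - μ) + 1 + lam * s := by
  intro i
  have sum_v : ∑ j : Fin d, (a ^ (j.val + 1) + μ + lam) = s + d * (μ + lam) := by
    simp only [sum_add_distrib, Fin.sum_univ_val_add_one_eq_sum_Icc (a ^ ·), ← hs, sum_const,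
      card_univ, Fintype.card_fin, nsmul_eq_mul]
    ring
  have antidiag_exp : i.rev.val + 1 = d - i.val := by
    rw [Fin.val_rev]
    omega
  have antidiag_product : a ^ (i.val + 1) * a ^ (d - i.val) = 1 := by
    rw [← pow_add, show i.val + 1 + (d - i.val) = d + 1 by omega, ha]
  simp only [hX, Fin.val_add_one_add_val_add_one_eq_iff]
  rw [sum_ite_diag_add_ite_antidiag_mul (-μ) lam (fun i => a ^ (i.val + 1))
    (fun j => a ^ (j.val + 1) + μ + lam), sum_v, antidiag_exp]
  linear_combination antidiag_product

/-- Solution of the block-linear system `X · v = x · (1,…,1)ᵗ`: for a commutative ring `R`,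
`a ∈ R` with `a^(d+1) = 1`, and the `d × d` matrix `X` with rows and columns labelled by
`{1, …, d}` given by `X i j = (if i = j then -μ else λ) + (if i + j = d+1 then a^i else 0)`,
every row `i` satisfies `∑ j, X i j · (a^j + μ + λ) = (μ+λ)((d-1)λ - μ) + 1 + λ·s`, where
`s = ∑_{k=1}^d a^k`. -/
theorem row_sum_X_system (d : ℕ) (hd : 1 ≤ d) (R : Type*) [CommRing R]
    (a : R) (ha : a ^ (d + 1) = 1) (μ lam : R)
    (X : Matrix (Fin d) (Fin d) R)
    (hX : ∀ i j : Fin d, X i j =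
      (if i = j then -μ else lam) +
      (if (i.val + 1) + (j.val + 1) = d + 1 then a ^ (i.val + 1) else 0))
    (s : R) (hs : s = ∑ k ∈ Finset.Icc 1 d, a ^ k) :
    ∀ i : Fin d, ∑ j : Fin d, X i j * (a ^ (j.val + 1) + μ + lam) =
      (μ + lam) * (((d : R) - 1) * lam - μ) + 1 + lam * s :=
  row_sum_X_system_general d R a ha μ lam X hX s hs
end

section
/- Let d ≥ 1 be an integer, R a commutative ring, a ∈ R with a^{d+1} = 1, and μ, λ ∈ R. Set s = ∑_{k=1}^{d} a^k, α = (μ+λ)·((d−1)·λ − μ) + 1 − λ, and x = (μ+λ)·((d−1)·λ − μ) + 1 + λ·s (so x = α + λ + λ·s). Then: (i) x · ((α + d·λ)·1 − λ·s) = α·(α + (d+1)·λ)·1; and (ii) ((α + d·λ)·1 − λ·s) · (s + d·(μ+λ)·1) = ((α + d·λ)·d·(μ+λ) − d·λ)·1 + (α + λ − d·λ·(μ+λ))·s. (In particular, when α(α+(d+1)λ) is invertible, x⁻¹ = (α(α+(d+1)λ))⁻¹·((α+dλ)·1 − λ·s) and x⁻¹·(s + d(μ+λ)) = (α(α+(d+1)λ))⁻¹·(((α+dλ)d(μ+λ)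 − dλ)·1 + (α + λ − dλ(μ+λ))·s).) -/
/-!
With `G = 1 + s = ∑_{k ≤ d} a^k`, the relation `G * (a - 1) = a^(d+1) - 1 = 0` makes `G` absorb
every power of `a`, so `G * s = d * G`, i.e. `s² = d + (d - 1) s`. Both identities are then
polynomial identities in `s`, `μ`, `λ` modulo this quadratic relation.
-/

open Finset

theorem geom_sum_mul_eq_self_of_pow_eq_one {R : Type*} [Ring R] {a : R} {n : ℕ}
    (h : a ^ n = 1) : (∑ i ∈ range n, a ^ i) * a = ∑ i ∈ range n, a ^ i := by
  rw [← sub_eq_zero, ← mul_sub_one, geom_sum_mul, h, sub_self]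

theorem geom_sum_mul_pow_eq_self_of_pow_eq_one {R : Type*} [Ring R] {a : R} {n : ℕ}
    (h : a ^ n = 1) (k : ℕ) : (∑ i ∈ range n, a ^ i) * a ^ k = ∑ i ∈ range n, a ^ i := by
  induction k with
  | zero => rw [pow_zero, mul_one]
  | succ k ih => rw [pow_succ, ← mul_assoc, ih, geom_sum_mul_eq_self_of_pow_eq_one h]

theorem one_add_sum_Icc_pow {R : Type*} [Semiring R] (a : R) (d : ℕ) :
    1 + ∑ k ∈ Icc 1 d, a ^ k = ∑ k ∈ range (d + 1), a ^ k := by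
  rw [sum_range_succ', range_eq_Ico, sum_Ico_add', zero_add, Ico_add_one_right_eq_Icc,
    pow_zero, add_comm]

theorem one_add_sum_Icc_pow_mul_self {R : Type*} [Ring R] {a : R} {d : ℕ}
    (h : a ^ (d + 1) = 1) :
    (1 + ∑ k ∈ Icc 1 d, a ^ k) * ∑ k ∈ Icc 1 d, a ^ k = d * (1 + ∑ k ∈ Icc 1 d, a ^ k) := by
  rw [one_add_sum_Icc_pow, mul_sum,
    sum_congr rfl fun k _ => geom_sum_mul_pow_eq_self_of_pow_eq_one h k, sum_const,
    Nat.card_Icc, Nat.add_sub_cancel, nsmul_eq_mul]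

theorem cyclic_algebra_inverse_identities_general (d : ℕ) (R : Type*) [CommRing R]
    (a : R) (ha : a ^ (d + 1) = 1) (μ lam : R)
    (s : R) (hs : s = ∑ k ∈ Finset.Icc 1 d, a ^ k)
    (α : R) (hα : α = (μ + lam) * (((d : R) - 1) * lam - μ) + 1 - lam)
    (x : R) (hx : x = (μ + lam) * (((d : R) - 1) * lam - μ) + 1 + lam * s) :
    x * ((α + (d : R) * lam) - lam * s) = α * (α + ((d : R) + 1) * lam) ∧
    ((α + (d : R) * lam) - lam * s) * (s + (d : R) * (μ + lam)) =
      ((α + (d : R) * lam) * (d : R) * (μ + lam) - (d : R) * lam) +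
        (α + lam - (d : R) * lam * (μ + lam)) * s := by
  have hs2 : (1 + s) * s = d * (1 + s) := hs ▸ one_add_sum_Icc_pow_mul_self ha
  subst hx hα
  exact ⟨by linear_combination (-lam ^ 2) * hs2, by linear_combination (-lam) * hs2⟩

/-- Identities in the group algebra of the cyclic group of order `d+1` used to compute
the inverse of `x = α + λ + λ·s` and the matrix coronal: for a commutative ring `R`,
`a ∈ R` with `a^(d+1) = 1`, `s = ∑_{k=1}^d a^k`, `α = (μ+λ)((d-1)λ-μ) + 1 - λ` and
`x = (μ+λ)((d-1)λ-μ) + 1 + λ·s`, one has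
(i) `x·((α+dλ) - λs) = α·(α+(d+1)λ)` and
(ii) `((α+dλ) - λs)·(s + d(μ+λ)) = ((α+dλ)d(μ+λ) - dλ) + (α + λ - dλ(μ+λ))·s`. -/
theorem cyclic_algebra_inverse_identities (d : ℕ) (hd : 1 ≤ d) (R : Type*) [CommRing R]
    (a : R) (ha : a ^ (d + 1) = 1) (μ lam : R)
    (s : R) (hs : s = ∑ k ∈ Finset.Icc 1 d, a ^ k)
    (α : R) (hα : α = (μ + lam) * (((d : R) - 1) * lam - μ) + 1 - lam)
    (x : R) (hx : x = (μ + lam) * (((d : R) - 1) * lam - μ) + 1 + lam * s) :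
    x * ((α + (d : R) * lam) - lam * s) = α * (α + ((d : R) + 1) * lam) ∧
    ((α + (d : R) * lam) - lam * s) * (s + (d : R) * (μ + lam)) =
      ((α + (d : R) * lam) * (d : R) * (μ + lam) - (d : R) * lam) +
        (α + lam - (d : R) * lam * (μ + lam)) * s :=
  cyclic_algebra_inverse_identities_general d R a ha μ lam s hs α hα x hx
end

section
/- Fix an integer d ≥ 1 and let N = d+1. For n ≥ 0 define complex matrices indexed by words W_n = Fin n → Fin N as follows: a_n is the permutation matrix of the map adding 1 (mod N) to the first letter of a word; b_1 = I_N; and for n ≥ 2, identifying W_n ≅ Fin N × W_{n−1} and labelling the first coordinate by i ∈ {1,…,d+1}, b_n is the block matrix whose block at position (i, d+1−i) is a_{n−1}^i for i = 1,…,d, whose block at position (d+1, d+1) is b_{n−1}, and all of whose other blocks are 0. For μ, λ ∈ ℂ set Ξ_n(μ,λ) = λ•(J_{N} ⊗ I_{N^{n−1}}) + b_n − (λ+μ)•I_{N^n}, where J_N ⊗ I means the block all-ones matrix with identity blocks. Let X be the principal submatrix of Ξ_n(μ,λ) on the block rows and columns with labels i ∈ {1,…,d}. Set α = (μ+λ)((d−1)λ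 − μ) + 1 − λ and suppose det X ≠ 0 and α(α + (d+1)λ) ≠ 0. Define μ′ = μ + (λ²/(α(α+(d+1)λ)))·((α+dλ)·d·(μ+λ) − dλ) and λ′ = −(λ²/(α(α+(d+1)λ)))·(α + λ − dλ(μ+λ)). Then for every n ≥ 2: det Ξ_n(μ,λ) = det X · det Ξ_{n−1}(μ′, λ′). -/
open Matrix

namespace ConeSubdivisionSchreier

variable (d : ℕ)

/-- Words of length `n` over the alphabet `Fin (d+1)`. -/
abbrev W (n : ℕ) : Type := Fin n → Fin (d + 1)

/-- The map adding `1 (mod d+1)` to the first letter of a word. -/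
def addFirst {n : ℕ} (w : W d n) : W d n :=
  fun i => if i.val = 0 then w i + 1 else w i

/-- The permutation matrix `a_n` of `addFirst`. -/
def aMat (n : ℕ) : Matrix (W d n) (W d n) ℂ :=
  fun w w' => if w' = addFirst d w then 1 else 0

/-- Tail of a word of length `n+1`. -/
def tail {n : ℕ} (w : W d (n + 1)) : W d n := fun i => w i.succ

/-- The recursively defined matrices `b_n`: `b_1 = I`, and for `n ≥ 2`, in the block
decomposition along the first letter (block labels `i = (first letter) + 1 ∈ {1,…,d+1}`),
the block at position `(i, d+1-i)` is `a_{n-1}^i` for `i ∈ {1,…,d}`, the block at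
position `(d+1, d+1)` is `b_{n-1}`, and all other blocks vanish. -/
def bMat : (n : ℕ) → Matrix (W d n) (W d n) ℂ
  | 0 => 1
  | 1 => 1
  | (n + 2) => fun w w' =>
      if ((w 0).val + 1) + ((w' 0).val + 1) = d + 1 then
        (aMat d (n + 1) ^ ((w 0).val + 1)) (tail d w) (tail d w')
      else if (w 0).val = d ∧ (w' 0).val = d then
        bMat (n + 1) (tail d w) (tail d w')
      else 0

/-- The block all-ones matrix with identity blocks, `J_N ⊗ I_{N^{n-1}}`: entry `(w, w')`
is `1` iff `w` and `w'` agree except possibly in the first letter. -/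
def JI (n : ℕ) : Matrix (W d n) (W d n) ℂ :=
  fun w w' => if ∀ i : Fin n, i.val ≠ 0 → w i = w' i then 1 else 0

/-- The two-parameter deformation `Ξ_n(μ,λ) = λ•(J_N ⊗ I) + b_n - (λ+μ)•I`. -/
def Xi (n : ℕ) (μ lam : ℂ) : Matrix (W d n) (W d n) ℂ :=
  lam • JI d n + bMat d n - (lam + μ) • 1

/-- The principal submatrix of `Ξ_n(μ,λ)` on the block rows and columns with labels in
`{1,…,d}`, i.e. on words whose first letter has value `< d`. -/
def Xsub (n : ℕ) (hn : 0 < n) (μ lam : ℂ) :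
    Matrix {w : W d n // (w ⟨0, hn⟩).val < d} {w : W d n // (w ⟨0, hn⟩).val < d} ℂ :=
  (Xi d n μ lam).submatrix Subtype.val Subtype.val

/-! Order the words of length `n` by whether their first letter is the last one. Then `Ξ_n(μ,λ)`
becomes a block matrix `(A B; C D)` with `A ≅ X`, `B` and `C` a column and a row of blocks `λ I`,
and `D = b_{n-1} - μ I`. For any block column `V` with `A V = B` one has
`det Ξ_n = det A · det (D - C V)`, from the factorisation `(A 0; C D - CV) (1 V; 0 1)`.
Such a `V` can be written down explicitly in the span of `1`, `J ⊗ I` and the powers of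
`a_{n-1}`, and the Schur complement `D - λ ∑ V_i` is then exactly `Ξ_{n-1}(μ', λ')`. -/

open Fin.NatCast

theorem det_fromBlocks_of_mul_eq {m n R : Type*} [Fintype m] [DecidableEq m] [Fintype n]
    [DecidableEq n] [CommRing R] {A : Matrix m m R} {B V : Matrix m n R} (C : Matrix n m R)
    (D : Matrix n n R) (hV : A * V = B) :
    (fromBlocks A B C D).det = A.det * (D - C * V).det := by
  have h : fromBlocks A B C D = fromBlocks A 0 C (D - C * V) * fromBlocks 1 V 0 1 := by
    simp [fromBlocks_multiply, hV]
  rw [h, det_mul, det_fromBlocks_zero₁₂, det_fromBlocks_zero₂₁]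
  simp

section BlockColumns

variable {ι κ κ' R : Type*}

def blockCol (f : ι → Matrix κ κ' R) : Matrix (ι × κ) κ' R := fun p u => f p.1 p.2 u

def blockRow (g : ι → Matrix κ κ' R) : Matrix κ (ι × κ') R := fun u q => g q.1 u q.2

theorem comp_mul_blockCol [Fintype ι] [Fintype κ] [NonUnitalNonAssocSemiring R]
    (H : Matrix ι ι (Matrix κ κ R)) (f : ι → Matrix κ κ' R) :
    comp ι ι κ κ R H * blockCol f = blockCol fun i => ∑ j, H i j * f j := by
  ext ⟨i, u⟩ u'
  simp only [mul_apply, Fintype.sum_prod_type, comp_apply, blockCol, Matrix.sum_apply]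

theorem blockRow_mul_blockCol {κ'' : Type*} [Fintype ι] [Fintype κ] [NonUnitalNonAssocSemiring R]
    (g : ι → Matrix κ'' κ R) (f : ι → Matrix κ κ' R) :
    blockRow g * blockCol f = ∑ i, g i * f i := by
  ext u u'
  simp only [mul_apply, Fintype.sum_prod_type, blockRow, blockCol, Matrix.sum_apply]

end BlockColumns

theorem tail_cons {n : ℕ} (x : Fin (d + 1)) (u : W d n) : tail d (Fin.cons x u) = u := rfl

theorem JI_succ_apply {n : ℕ} (w w' : W d (n + 1)) :
    JI d (n + 1) w w' = if tail d w = tail d w' then 1 else 0 := by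
  have h : (∀ i : Fin (n + 1), i.val ≠ 0 → w i = w' i) ↔ tail d w = tail d w' := by
    refine ⟨fun h => funext fun i => h i.succ (by simp), fun h i hi => ?_⟩
    obtain ⟨j, rfl⟩ := Fin.exists_succ_eq.mpr (Fin.ne_of_val_ne hi)
    exact congrFun h j
  simp only [JI, h]

def shiftFirst (k : ℕ) {n : ℕ} (w : W d n) : W d n :=
  fun i => if i.val = 0 then w i + k else w i

theorem addFirst_shiftFirst (k : ℕ) {n : ℕ} (w : W d n) :
    addFirst d (shiftFirst d k w) = shiftFirst d (k + 1) w := by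
  funext i
  by_cases h : i.val = 0 <;> simp [addFirst, shiftFirst, h, add_assoc]

theorem aMat_pow_apply {n : ℕ} (k : ℕ) (w w' : W d n) :
    (aMat d n ^ k) w w' = if w' = shiftFirst d k w then 1 else 0 := by
  induction k generalizing w' with
  | zero =>
    have : shiftFirst d 0 w = w := funext fun i => by simp [shiftFirst]
    simp [one_apply, this, eq_comm]
  | succ k ih =>
    rw [pow_succ, mul_apply, Finset.sum_eq_single (shiftFirst d k w)]
    · simp [ih, aMat, addFirst_shiftFirst]
    · intro v _ hv
      simp [ih, hv]
    · simp

theorem aMat_pow_card {n : ℕ} : aMat d n ^ (d + 1) = 1 := by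
  have h : ∀ w : W d n, shiftFirst d (d + 1) w = w := fun w =>
    funext fun i => by by_cases h : i.val = 0 <;> simp [shiftFirst, h]
  ext w w'
  simp [aMat_pow_apply, h, one_apply, eq_comm]

theorem tail_shiftFirst (k : ℕ) {n : ℕ} (w : W d (n + 1)) :
    tail d (shiftFirst d k w) = tail d w := by
  funext i; simp [tail, shiftFirst]

theorem aMat_pow_mul_JI {n : ℕ} (k : ℕ) : aMat d (n + 1) ^ k * JI d (n + 1) = JI d (n + 1) := by
  ext w w'
  rw [mul_apply, Finset.sum_eq_single (shiftFirst d k w)]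
  · simp [aMat_pow_apply, JI_succ_apply, tail_shiftFirst]
  · intro v _ hv
    simp [aMat_pow_apply, hv]
  · simp

theorem eq_shiftFirst_iff {n : ℕ} (w w' : W d (n + 1)) (t : Fin (d + 1)) :
    w' = shiftFirst d t w ↔ t = w' 0 - w 0 ∧ tail d w = tail d w' := by
  constructor
  · rintro rfl
    exact ⟨by simp [shiftFirst], (tail_shiftFirst d t w).symm⟩
  · rintro ⟨rfl, h⟩
    funext i
    cases i using Fin.cases with
    | zero => simp [shiftFirst]
    | succ j => simpa [shiftFirst, tail] using (congrFun h j).symm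

theorem sum_aMat_pow {n : ℕ} : ∑ t : Fin (d + 1), aMat d (n + 1) ^ (t : ℕ) = JI d (n + 1) := by
  ext w w'
  simp only [Matrix.sum_apply, aMat_pow_apply, eq_shiftFirst_iff, ite_and]
  rw [Finset.sum_ite_eq']
  simp [JI_succ_apply]

theorem sum_aMat_pow_succ {n : ℕ} :
    ∑ i : Fin d, aMat d (n + 1) ^ ((i : ℕ) + 1) = JI d (n + 1) - 1 := by
  rw [← sum_aMat_pow, Fin.sum_univ_succ]
  simp

def consLow {m : ℕ} (p : Fin d × W d m) : W d (m + 1) := Fin.cons p.1.castSucc p.2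

def consLast {m : ℕ} (u : W d m) : W d (m + 1) := Fin.cons (Fin.last d) u

def firstLetterSplit (m : ℕ) : (Fin d × W d m) ⊕ W d m ≃ W d (m + 1) where
  toFun := Sum.elim (consLow d) (consLast d)
  invFun w := if h : (w 0).val < d then .inl (⟨(w 0).val, h⟩, tail d w) else .inr (tail d w)
  left_inv := by
    rintro (⟨i, u⟩ | u)
    · simp [consLow, i.isLt, tail_cons]
    · simp [consLast, tail_cons]
  right_inv w := by
    by_cases h : (w 0).val < d
    · simp only [h, dif_pos, Sum.elim_inl]
      exact Fin.cons_self_tail w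
    · have hlast : w 0 = Fin.last d := Fin.ext (by have := (w 0).isLt; simp; omega)
      simp only [h, dif_neg, not_false_eq_true, Sum.elim_inr, consLast, ← hlast]
      exact Fin.cons_self_tail w

def lowWordsEquiv (m : ℕ) :
    Fin d × W d m ≃ {w : W d (m + 1) // (w ⟨0, m.succ_pos⟩).val < d} where
  toFun p := ⟨consLow d p, by simp [consLow]⟩
  invFun w := (⟨(w.1 0).val, w.2⟩, tail d w.1)
  left_inv := by
    rintro ⟨i, u⟩
    simp [consLow, tail_cons]
  right_inv := by
    rintro ⟨w, h⟩
    exact Subtype.ext (Fin.cons_self_tail w)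

theorem det_Xsub_eq_det_submatrix_consLow {m : ℕ} (μ lam : ℂ) :
    (Xsub d (m + 1) m.succ_pos μ lam).det =
      ((Xi d (m + 1) μ lam).submatrix (consLow d) (consLow d)).det :=
  (det_submatrix_equiv_self (lowWordsEquiv d m) _).symm

theorem det_Xi_eq_det_fromBlocks {m : ℕ} (μ lam : ℂ) :
    (Xi d (m + 1) μ lam).det =
      (fromBlocks ((Xi d (m + 1) μ lam).submatrix (consLow d) (consLow d))
        ((Xi d (m + 1) μ lam).submatrix (consLow d) (consLast d))
        ((Xi d (m + 1) μ lam).submatrix (consLast d) (consLow d))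
        ((Xi d (m + 1) μ lam).submatrix (consLast d) (consLast d))).det := by
  rw [← det_submatrix_equiv_self (firstLetterSplit d m), ← fromBlocks_toBlocks
    ((Xi d (m + 1) μ lam).submatrix (firstLetterSplit d m) (firstLetterSplit d m))]
  rfl

theorem Xi_cons_cons {m : ℕ} (μ lam : ℂ) (x x' : Fin (d + 1)) (u u' : W d (m + 1)) :
    Xi d (m + 2) μ lam (Fin.cons x u) (Fin.cons x' u') =
      lam * (if u = u' then 1 else 0)
        + (if (x.val + 1) + (x'.val + 1) = d + 1 then (aMat d (m + 1) ^ (x.val + 1)) u u'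
          else if x.val = d ∧ x'.val = d then bMat d (m + 1) u u' else 0)
        - (lam + μ) * (if x = x' ∧ u = u' then 1 else 0) := by
  simp only [Xi, Matrix.sub_apply, Matrix.add_apply, Matrix.smul_apply, smul_eq_mul, one_apply]
  rw [JI_succ_apply]
  simp only [tail_cons, Fin.cons_inj]
  rfl

theorem Xi_submatrix_consLow_consLow {m : ℕ} (μ lam : ℂ) :
    (Xi d (m + 2) μ lam).submatrix (consLow d) (consLow d) =
      comp (Fin d) (Fin d) (W d (m + 1)) (W d (m + 1)) ℂ
        (of fun i j => lam • 1 + if j = i.rev then aMat d (m + 1) ^ (i.val + 1) else 0)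
        - (lam + μ) • 1 := by
  ext ⟨i, u⟩ ⟨j, u'⟩
  have hrev : (i.val + 1) + (j.val + 1) = d + 1 ↔ j = i.rev := by
    rw [Fin.ext_iff, Fin.val_rev]; omega
  simp only [submatrix_apply, consLow, Xi_cons_cons, Fin.val_castSucc, hrev, i.isLt.ne,
    false_and, if_false, Fin.castSucc_inj, comp_apply, of_apply, Matrix.add_apply,
    Matrix.sub_apply, Matrix.smul_apply, one_apply, smul_eq_mul, Prod.mk.injEq]
  split_ifs <;> simp

theorem Xi_submatrix_consLow_consLast {m : ℕ} (μ lam : ℂ) :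
    (Xi d (m + 2) μ lam).submatrix (consLow d) (consLast d) = blockCol fun _ => lam • 1 := by
  ext ⟨i, u⟩ u'
  simp [consLow, consLast, Xi_cons_cons, i.isLt.ne, Fin.castSucc_ne_last, blockCol,
    one_apply]

theorem Xi_submatrix_consLast_consLow {m : ℕ} (μ lam : ℂ) :
    (Xi d (m + 2) μ lam).submatrix (consLast d) (consLow d) = blockRow fun _ => lam • 1 := by
  ext u ⟨j, u'⟩
  simp [consLow, consLast, Xi_cons_cons, j.isLt.ne, (Fin.castSucc_ne_last j).symm, blockRow,
    one_apply]

theorem Xi_submatrix_consLast_consLast {m : ℕ} (μ lam : ℂ) :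
    (Xi d (m + 2) μ lam).submatrix (consLast d) (consLast d) = bMat d (m + 1) - μ • 1 := by
  ext u u'
  have h : (d + 1) + (d + 1) ≠ d + 1 := by omega
  simp only [submatrix_apply, consLast, Xi_cons_cons, Fin.val_last, h, if_false, and_self,
    if_true, true_and, Matrix.sub_apply, Matrix.smul_apply, one_apply, smul_eq_mul]
  split_ifs <;> ring

/-- The solution `V` of `A V = B` for the blocks `A`, `B` of `Ξ_{m+2}(μ,λ)` along the split by
first letter. The ansatz `V_i = x + y a^(i+1) + z (J ⊗ I)` is closed under the products that occur,
since `a^(d+1) = 1` and `a^k (J ⊗ I) = J ⊗ I`, so `A V = B` reduces to three scalar equations. -/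
noncomputable def schurColumn (m : ℕ) (μ lam α : ℂ) (i : Fin d) :
    Matrix (W d (m + 1)) (W d (m + 1)) ℂ :=
  (lam * (lam + μ) / α) • 1 + (lam / α) • aMat d (m + 1) ^ (i.val + 1)
    - (lam ^ 2 * (lam + μ + 1) / (α * (α + (d + 1) * lam))) • JI d (m + 1)

theorem sum_schurColumn (m : ℕ) (μ lam α : ℂ) :
    ∑ i, schurColumn d m μ lam α i =
      (d * (lam * (lam + μ) / α) - lam / α) • 1
        + (lam / α - d * (lam ^ 2 * (lam + μ + 1) / (α * (α + (d + 1) * lam)))) •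
          JI d (m + 1) := by
  simp only [schurColumn, Finset.sum_sub_distrib, Finset.sum_add_distrib, ← Finset.smul_sum,
    sum_aMat_pow_succ, Finset.sum_const, Finset.card_univ, Fintype.card_fin]
  module

theorem aMat_pow_mul_schurColumn_rev (m : ℕ) (μ lam α : ℂ) (i : Fin d) :
    aMat d (m + 1) ^ (i.val + 1) * schurColumn d m μ lam α i.rev =
      (lam * (lam + μ) / α) • aMat d (m + 1) ^ (i.val + 1) + (lam / α) • 1
        - (lam ^ 2 * (lam + μ + 1) / (α * (α + (d + 1) * lam))) • JI d (m + 1) := by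
  have hexp : (i.val + 1) + (i.rev.val + 1) = d + 1 := by rw [Fin.val_rev]; omega
  simp only [schurColumn, mul_sub, mul_add, mul_smul_comm, mul_one, ← pow_add, hexp,
    aMat_pow_card, aMat_pow_mul_JI]

theorem lowBlock_mul_schurColumn {m : ℕ} {μ lam α : ℂ}
    (hα : α = (μ + lam) * ((d - 1) * lam - μ) + 1 - lam)
    (hden : α * (α + (d + 1) * lam) ≠ 0) :
    (comp (Fin d) (Fin d) (W d (m + 1)) (W d (m + 1)) ℂ
        (of fun i j => lam • 1 + if j = i.rev then aMat d (m + 1) ^ (i.val + 1) else 0)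
        - (lam + μ) • 1) * blockCol (schurColumn d m μ lam α) = blockCol fun _ => lam • 1 := by
  have hrow : ∀ i : Fin d,
      ∑ j, (lam • 1 + if j = i.rev then aMat d (m + 1) ^ (i.val + 1) else 0)
          * schurColumn d m μ lam α j - (lam + μ) • schurColumn d m μ lam α i = lam • 1 := by
    intro i
    simp only [add_mul, ite_mul, zero_mul, smul_mul_assoc, one_mul, Finset.sum_add_distrib,
      ← Finset.smul_sum, Finset.sum_ite_eq', Finset.mem_univ, if_true, sum_schurColumn,
      aMat_pow_mul_schurColumn_rev]
    simp only [schurColumn]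
    have hα0 : α ≠ 0 := left_ne_zero_of_mul hden
    have hγ0 : α + lam * (d + 1) ≠ 0 := by rw [mul_comm]; exact right_ne_zero_of_mul hden
    match_scalars <;> field_simp <;> rw [hα] <;> ring
  rw [Matrix.sub_mul, comp_mul_blockCol, Matrix.smul_mul, Matrix.one_mul]
  ext ⟨i, u⟩ u'
  simpa [blockCol] using congrFun (congrFun (hrow i) u) u'

theorem schurComplement_eq_Xi {m : ℕ} {μ lam α : ℂ}
    (hα : α = (μ + lam) * ((d - 1) * lam - μ) + 1 - lam)
    (hden : α * (α + (d + 1) * lam) ≠ 0) :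
    bMat d (m + 1) - μ • 1
        - blockRow (fun _ : Fin d => (lam • 1 : Matrix (W d (m + 1)) (W d (m + 1)) ℂ))
          * blockCol (schurColumn d m μ lam α) =
      Xi d (m + 1)
        (μ + lam ^ 2 / (α * (α + (d + 1) * lam)) * ((α + d * lam) * d * (μ + lam) - d * lam))
        (-(lam ^ 2 / (α * (α + (d + 1) * lam)) * (α + lam - d * lam * (μ + lam)))) := by
  have hα0 : α ≠ 0 := left_ne_zero_of_mul hden
  have hγ0 : α + lam * (d + 1) ≠ 0 := by rw [mul_comm]; exact right_ne_zero_of_mul hden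
  simp only [blockRow_mul_blockCol, smul_mul_assoc, one_mul, ← Finset.smul_sum, sum_schurColumn,
    Xi]
  match_scalars <;> field_simp <;> rw [hα] <;> ring

/-- **Spectral decimation recursion for the cone subdivision.** For `n ≥ 2`, with
`α = (μ+λ)((d-1)λ - μ) + 1 - λ`, `α(α + (d+1)λ) ≠ 0`, `det X ≠ 0`, and the renormalized
parameters `μ'`, `λ'`, one has `det Ξ_n(μ,λ) = det X · det Ξ_{n-1}(μ',λ')`. -/
theorem det_Xi_recursion (μ lam : ℂ)
    (α : ℂ) (hα : α = (μ + lam) * (((d : ℂ) - 1) * lam - μ) + 1 - lam)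
    (hden : α * (α + ((d : ℂ) + 1) * lam) ≠ 0)
    (μ' lam' : ℂ)
    (hμ' : μ' = μ + lam ^ 2 / (α * (α + ((d : ℂ) + 1) * lam)) *
      ((α + (d : ℂ) * lam) * (d : ℂ) * (μ + lam) - (d : ℂ) * lam))
    (hlam' : lam' = -(lam ^ 2 / (α * (α + ((d : ℂ) + 1) * lam)) *
      (α + lam - (d : ℂ) * lam * (μ + lam))))
    (n : ℕ) (hn : 2 ≤ n) :
    (Xi d n μ lam).det = (Xsub d n (by omega) μ lam).det * (Xi d (n - 1) μ' lam').det := by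
  obtain ⟨m, rfl⟩ : ∃ m, n = m + 2 := ⟨n - 2, by omega⟩
  have hsolve : (Xi d (m + 2) μ lam).submatrix (consLow d) (consLow d)
      * blockCol (schurColumn d m μ lam α) =
        (Xi d (m + 2) μ lam).submatrix (consLow d) (consLast d) := by
    rw [Xi_submatrix_consLow_consLow, Xi_submatrix_consLow_consLast]
    exact lowBlock_mul_schurColumn d hα hden
  rw [det_Xi_eq_det_fromBlocks, det_fromBlocks_of_mul_eq _ _ hsolve,
    det_Xsub_eq_det_submatrix_consLow, Xi_submatrix_consLast_consLast,
    Xi_submatrix_consLast_consLow, schurComplement_eq_Xi d hα hden, hμ', hlam']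
  rfl

end ConeSubdivisionSchreier
end

section
/- Fix an integer d ≥ 2 and real numbers μ, λ with L = (d−1)λ − μ + 1 ≠ 0 and K = (d−1)λ² + (d−2)λμ − λ − μ² + 1 ≠ 0; define μ′ = μ + d·λ²·((d−1)λ² + (d−2)λμ − μ² + μ)/(L·K) and λ′ = λ²·(λ + μ − 1)/(L·K). For τ ∈ ℝ set Φ_τ(μ,λ) = μ² − 1 − (d−1)λμ − dλ² − τλ, and set A₁(μ,λ) = μ + λ − 1 and g(ζ) = ζ² − (d−1)ζ − (d+1). If θ, θ₀, θ₁ ∈ ℝ satisfy g(θ₀) = θ, g(θ₁) = θ and θ₀ ≠ θ₁, then Φ_θ(μ′, λ′) = A₁(μ,λ)·Φ_{θ₀}(μ,λ)·Φ_{θ₁}(μ,λ)/(L·K). -/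
/-!
Write `Φ_τ = Q - τλ` with `Q = Φ_0`. If `θ₀ ≠ θ₁` are roots of `g(ζ) = θ`, Vieta gives
`θ₀ + θ₁ = d - 1` and `θ₀θ₁ = -(θ + d + 1)`, so `Φ_{θ₀}Φ_{θ₁} = Q² - (d-1)λQ - (θ+d+1)λ²`
no longer depends on the choice of the roots. On the other side, `μ' = N/(LK)` and
`λ' = M/(LK)` with polynomials `N`, `M`, and the homogenised form
`N² - (LK)² - (d-1)MN - dM² - θM·LK` factors as `LK·A₁·(Q² - (d-1)λQ - (θ+d+1)λ²)`.
-/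

section

variable {R : Type*}

def hyperbolaForm [CommRing R] (D τ μ l : R) : R :=
  μ ^ 2 - 1 - (D - 1) * l * μ - D * l ^ 2 - τ * l

lemma add_eq_of_sq_sub_mul_eq [CommRing R] [IsDomain R] {b θ₀ θ₁ : R}
    (h : θ₀ ^ 2 - b * θ₀ = θ₁ ^ 2 - b * θ₁) (hne : θ₀ ≠ θ₁) : θ₀ + θ₁ = b := by
  have hfactor : (θ₀ - θ₁) * (θ₀ + θ₁ - b) = 0 := by linear_combination h
  exact sub_eq_zero.mp ((mul_eq_zero.mp hfactor).resolve_left (sub_ne_zero.mpr hne))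

lemma hyperbolaForm_mul_hyperbolaForm [CommRing R] {D θ θ₀ θ₁ : R}
    (hsum : θ₀ + θ₁ = D - 1) (hprod : θ₀ * θ₁ = -(θ + D + 1)) (μ l : R) :
    hyperbolaForm D θ₀ μ l * hyperbolaForm D θ₁ μ l =
      hyperbolaForm D 0 μ l ^ 2 - (D - 1) * l * hyperbolaForm D 0 μ l
        - (θ + D + 1) * l ^ 2 := by
  unfold hyperbolaForm
  linear_combination (-(l * (μ ^ 2 - 1 - (D - 1) * l * μ - D * l ^ 2))) * hsum + l ^ 2 * hprod

lemma hyperbolaForm_div [Field R] (D τ N M : R) {P : R} (hP : P ≠ 0) :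
    hyperbolaForm D τ (N / P) (M / P) =
      (N ^ 2 - P ^ 2 - (D - 1) * M * N - D * M ^ 2 - τ * M * P) / P ^ 2 := by
  unfold hyperbolaForm
  field_simp

lemma renormalization_numerator [CommRing R] {D μ l L K : R}
    (hL : L = (D - 1) * l - μ + 1) (hK : K = (D - 1) * l ^ 2 + (D - 2) * l * μ - l - μ ^ 2 + 1)
    (θ : R) :
    let N := μ * (L * K) + D * l ^ 2 * ((D - 1) * l ^ 2 + (D - 2) * l * μ - μ ^ 2 + μ)
    let M := l ^ 2 * (l + μ - 1)
    N ^ 2 - (L * K) ^ 2 - (D - 1) * M * N - D * M ^ 2 - θ * M * (L * K) =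
      L * K * ((μ + l - 1) * (hyperbolaForm D 0 μ l ^ 2 - (D - 1) * l * hyperbolaForm D 0 μ l
        - (θ + D + 1) * l ^ 2)) := by
  subst hL hK
  unfold hyperbolaForm
  ring

end

theorem Phi_theta_renormalization_general (d : ℕ) (μ lam : ℝ)
    (L K : ℝ)
    (hL : L = ((d : ℝ) - 1) * lam - μ + 1)
    (hK : K = ((d : ℝ) - 1) * lam ^ 2 + ((d : ℝ) - 2) * lam * μ - lam - μ ^ 2 + 1)
    (hL0 : L ≠ 0) (hK0 : K ≠ 0)
    (μ' lam' : ℝ)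
    (hμ' : μ' = μ + (d : ℝ) * lam ^ 2 *
      (((d : ℝ) - 1) * lam ^ 2 + ((d : ℝ) - 2) * lam * μ - μ ^ 2 + μ) / (L * K))
    (hlam' : lam' = lam ^ 2 * (lam + μ - 1) / (L * K))
    (Φ : ℝ → ℝ → ℝ → ℝ)
    (hΦ : ∀ τ m l : ℝ, Φ τ m l = m ^ 2 - 1 - ((d : ℝ) - 1) * l * m - (d : ℝ) * l ^ 2 - τ * l)
    (A₁ : ℝ → ℝ → ℝ) (hA₁ : ∀ m l : ℝ, A₁ m l = m + l - 1)
    (g : ℝ → ℝ) (hg : ∀ z : ℝ, g z = z ^ 2 - ((d : ℝ) - 1) * z - ((d : ℝ) + 1))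
    (θ θ₀ θ₁ : ℝ) (hθ₀ : g θ₀ = θ) (hθ₁ : g θ₁ = θ) (hne : θ₀ ≠ θ₁) :
    Φ θ μ' lam' = A₁ μ lam * Φ θ₀ μ lam * Φ θ₁ μ lam / (L * K) := by
  have hΦ' : Φ = hyperbolaForm (d : ℝ) := by
    funext τ m l
    exact hΦ τ m l
  have hLK : L * K ≠ 0 := mul_ne_zero hL0 hK0
  have hroots : g θ₀ = g θ₁ := hθ₀.trans hθ₁.symm
  rw [hg, hg] at hroots
  have hsum : θ₀ + θ₁ = (d : ℝ) - 1 := add_eq_of_sq_sub_mul_eq (by linear_combination hroots) hne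
  have hprod : θ₀ * θ₁ = -(θ + (d : ℝ) + 1) := by
    rw [hg] at hθ₀
    linear_combination θ₀ * hsum - hθ₀
  have hμ'div : μ' = (μ * (L * K) + (d : ℝ) * lam ^ 2 *
      (((d : ℝ) - 1) * lam ^ 2 + ((d : ℝ) - 2) * lam * μ - μ ^ 2 + μ)) / (L * K) := by
    rw [hμ']
    field_simp
  rw [hΦ', hA₁, mul_assoc, hyperbolaForm_mul_hyperbolaForm hsum hprod, hμ'div, hlam',
    hyperbolaForm_div _ _ _ _ hLK, renormalization_numerator hL hK, pow_two (L * K),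
    mul_div_mul_left _ _ hLK]

/-- Behaviour of the quadratics `Φ_τ(μ,λ) = μ² - 1 - (d-1)λμ - dλ² - τλ` under the
renormalization map `F(μ,λ) = (μ',λ')`: if `g(θ₀) = g(θ₁) = θ` with `θ₀ ≠ θ₁`, where
`g(ζ) = ζ² - (d-1)ζ - (d+1)`, then `Φ_θ(μ',λ') = A₁(μ,λ)·Φ_{θ₀}(μ,λ)·Φ_{θ₁}(μ,λ)/(L·K)`. -/
theorem Phi_theta_renormalization (d : ℕ) (hd : 2 ≤ d) (μ lam : ℝ)
    (L K : ℝ)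
    (hL : L = ((d : ℝ) - 1) * lam - μ + 1)
    (hK : K = ((d : ℝ) - 1) * lam ^ 2 + ((d : ℝ) - 2) * lam * μ - lam - μ ^ 2 + 1)
    (hL0 : L ≠ 0) (hK0 : K ≠ 0)
    (μ' lam' : ℝ)
    (hμ' : μ' = μ + (d : ℝ) * lam ^ 2 *
      (((d : ℝ) - 1) * lam ^ 2 + ((d : ℝ) - 2) * lam * μ - μ ^ 2 + μ) / (L * K))
    (hlam' : lam' = lam ^ 2 * (lam + μ - 1) / (L * K))
    (Φ : ℝ → ℝ → ℝ → ℝ)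
    (hΦ : ∀ τ m l : ℝ, Φ τ m l = m ^ 2 - 1 - ((d : ℝ) - 1) * l * m - (d : ℝ) * l ^ 2 - τ * l)
    (A₁ : ℝ → ℝ → ℝ) (hA₁ : ∀ m l : ℝ, A₁ m l = m + l - 1)
    (g : ℝ → ℝ) (hg : ∀ z : ℝ, g z = z ^ 2 - ((d : ℝ) - 1) * z - ((d : ℝ) + 1))
    (θ θ₀ θ₁ : ℝ) (hθ₀ : g θ₀ = θ) (hθ₁ : g θ₁ = θ) (hne : θ₀ ≠ θ₁) :
    Φ θ μ' lam' = A₁ μ lam * Φ θ₀ μ lam * Φ θ₁ μ lam / (L * K) :=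
  Phi_theta_renormalization_general d μ lam L K hL hK hL0 hK0 μ' lam' hμ' hlam' Φ hΦ A₁ hA₁ g hg θ
    θ₀ θ₁ hθ₀ hθ₁ hne
end

section
/- Let d ≥ 2 be an integer and set c = (d+1)d/2 − (d+1) ∈ ℚ. Suppose α, β, σ : ℕ → ℚ satisfy: α 1 = d; β 1 = 0; for all n ≥ 2, β n = (c+1)·(d+1)^{n−2} + β (n−1) and α n = c·(d+1)^{n−2} + σ n + α (n−1) + 1; σ 2 = 0; and for all n ≥ 3, σ n = ∑_{k=1}^{n−2} 2^{k−1}·α (n−1−k) + ∑_{k=1}^{n−3} 2^{k−1}·β (n−1−k). Then for all n ≥ 2: σ n = (d+1)^{n−2} − 1; and for all n ≥ 1: β n = ((d−1)/2)·((d+1)^{n−1} − 1) and α n = β n + d. -/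
/-!
The sequence `β` has geometric increments, so it telescopes to a geometric sum. Subtracting the
`σ`-recurrence at `n` from the one at `n + 1` collapses the weighted sums to the first-order
relation `σ (n + 1) = α (n - 1) + β (n - 1) + 2 σ n`, and comparing the recurrences of `α` and `β`
shows that `α n - β n` is constant exactly as long as `σ n = (d + 1) ^ (n - 2) - 1`. A joint
induction on these two facts closes the argument.
-/

open Finset

theorem sum_Icc_pow_mul_sub_succ {R : Type*} [Semiring R] (r : R) (f : ℕ → R) (N a : ℕ) :
    ∑ k ∈ Icc 1 (N + 1), r ^ (k - 1) * f (a - k) =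
      f (a - 1) + r * ∑ k ∈ Icc 1 N, r ^ (k - 1) * f (a - 1 - k) := by
  rw [← insert_Icc_add_one_left_eq_Icc (by omega), sum_insert (by simp), ← map_add_right_Icc,
    sum_map, mul_sum]
  congr 1
  · simp
  · refine sum_congr rfl fun k hk => ?_
    rw [addRightEmbedding_apply, Nat.add_sub_cancel, Nat.sub_sub, add_comm 1 k, ← mul_assoc,
      ← pow_succ', Nat.sub_add_cancel (mem_Icc.1 hk).1]

theorem eq_mul_pow_sub_one_of_geometric_increments {R : Type*} [CommRing R] {q a : R}
    {β : ℕ → R} (h1 : β 1 = 0) (hrec : ∀ n, 2 ≤ n → β n = (q - 1) * a * q ^ (n - 2) + β (n - 1))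
    {n : ℕ} (hn : 1 ≤ n) : β n = a * (q ^ (n - 1) - 1) := by
  induction n, hn using Nat.le_induction with
  | base => simp [h1]
  | succ n hn ih =>
    obtain ⟨m, rfl⟩ := Nat.exists_eq_add_of_le' hn
    rw [hrec (m + 2) (by omega), show m + 2 - 1 = m + 1 by omega, ih]
    simp only [Nat.add_sub_cancel, pow_succ]
    ring

section WeightedSumRecurrence

variable {R : Type*} [CommSemiring R] {α β σ : ℕ → R}
  (hσrec : ∀ n, 3 ≤ n → σ n =
    (∑ k ∈ Icc 1 (n - 2), 2 ^ (k - 1) * α (n - 1 - k)) +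
    (∑ k ∈ Icc 1 (n - 3), 2 ^ (k - 1) * β (n - 1 - k)))
include hσrec

theorem sigma_three_eq : σ 3 = α 1 := by
  simp [hσrec 3 le_rfl]

theorem sigma_add_four_eq (m : ℕ) : σ (m + 4) = α (m + 2) + β (m + 2) + 2 * σ (m + 3) := by
  rw [hσrec (m + 4) (by omega), hσrec (m + 3) (by omega),
    show m + 4 - 2 = m + 1 + 1 by omega, show m + 4 - 3 = m + 1 by omega,
    sum_Icc_pow_mul_sub_succ 2 α (m + 1), sum_Icc_pow_mul_sub_succ 2 β m,
    show m + 4 - 1 - 1 = m + 2 by omega, show m + 3 - 1 = m + 2 by omega,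
    show m + 3 - 2 = m + 1 by omega, show m + 3 - 3 = m by omega]
  ring

end WeightedSumRecurrence

theorem multiplicity_sequences_closed_form_general (d : ℕ)
    (c : ℚ) (hc : c = ((d : ℚ) + 1) * (d : ℚ) / 2 - ((d : ℚ) + 1))
    (α β σ : ℕ → ℚ)
    (hα1 : α 1 = (d : ℚ)) (hβ1 : β 1 = 0)
    (hβrec : ∀ n, 2 ≤ n → β n = (c + 1) * ((d : ℚ) + 1) ^ (n - 2) + β (n - 1))
    (hαrec : ∀ n, 2 ≤ n → α n = c * ((d : ℚ) + 1) ^ (n - 2) + σ n + α (n - 1) + 1)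
    (hσ2 : σ 2 = 0)
    (hσrec : ∀ n, 3 ≤ n → σ n =
      (∑ k ∈ Finset.Icc 1 (n - 2), 2 ^ (k - 1) * α (n - 1 - k)) +
      (∑ k ∈ Finset.Icc 1 (n - 3), 2 ^ (k - 1) * β (n - 1 - k))) :
    (∀ n, 2 ≤ n → σ n = ((d : ℚ) + 1) ^ (n - 2) - 1) ∧
    (∀ n, 1 ≤ n →
      β n = (((d : ℚ) - 1) / 2) * (((d : ℚ) + 1) ^ (n - 1) - 1) ∧
      α n = β n + (d : ℚ)) := by
  have hc1 : c + 1 = ((d + 1 : ℚ) - 1) * ((d - 1) / 2) := by rw [hc]; ring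
  have hβ : ∀ n, 1 ≤ n → β n = ((d - 1) / 2) * ((d + 1 : ℚ) ^ (n - 1) - 1) := fun n hn =>
    eq_mul_pow_sub_one_of_geometric_increments hβ1 (hc1 ▸ hβrec) hn
  have key : ∀ m, σ (m + 2) = (d + 1 : ℚ) ^ m - 1 ∧ α (m + 1) = β (m + 1) + d := by
    intro m
    induction m with
    | zero => simp [hσ2, hα1, hβ1]
    | succ m ih =>
      have hσ : σ (m + 3) = (d + 1 : ℚ) ^ (m + 1) - 1 := by
        cases m with
        | zero => rw [sigma_three_eq hσrec, hα1]; ring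
        | succ k =>
          rw [sigma_add_four_eq hσrec, ih.1, ih.2, hβ (k + 2) (by omega),
            show k + 2 - 1 = k + 1 by omega, pow_succ _ (k + 1)]
          ring
      refine ⟨hσ, ?_⟩
      rw [hαrec (m + 2) le_add_self, hβrec (m + 2) le_add_self, Nat.add_sub_cancel,
        show m + 2 - 1 = m + 1 by omega, ih.1, ih.2, hc]
      ring
  refine ⟨fun n hn => ?_, fun n hn => ⟨hβ n hn, ?_⟩⟩
  · obtain ⟨m, rfl⟩ := Nat.exists_eq_add_of_le' hn
    simpa using (key m).1
  · obtain ⟨m, rfl⟩ := Nat.exists_eq_add_of_le' hn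
    exact (key m).2

/-- Closed forms for the multiplicity sequences `α_n`, `β_n` and the auxiliary exponent
sequence `σ_n` in the factorization of the determinants `D_n` for the cone subdivision:
with `c = (d+1)d/2 - (d+1)` and the stated recurrences and initial values, one has
`σ n = (d+1)^(n-2) - 1` for `n ≥ 2`, and `β n = ((d-1)/2)((d+1)^(n-1) - 1)`,
`α n = β n + d` for `n ≥ 1`. -/
theorem multiplicity_sequences_closed_form (d : ℕ) (hd : 2 ≤ d)
    (c : ℚ) (hc : c = ((d : ℚ) + 1) * (d : ℚ) / 2 - ((d : ℚ) + 1))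
    (α β σ : ℕ → ℚ)
    (hα1 : α 1 = (d : ℚ)) (hβ1 : β 1 = 0)
    (hβrec : ∀ n, 2 ≤ n → β n = (c + 1) * ((d : ℚ) + 1) ^ (n - 2) + β (n - 1))
    (hαrec : ∀ n, 2 ≤ n → α n = c * ((d : ℚ) + 1) ^ (n - 2) + σ n + α (n - 1) + 1)
    (hσ2 : σ 2 = 0)
    (hσrec : ∀ n, 3 ≤ n → σ n =
      (∑ k ∈ Finset.Icc 1 (n - 2), 2 ^ (k - 1) * α (n - 1 - k)) +
      (∑ k ∈ Finset.Icc 1 (n - 3), 2 ^ (k - 1) * β (n - 1 - k))) :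
    (∀ n, 2 ≤ n → σ n = ((d : ℚ) + 1) ^ (n - 2) - 1) ∧
    (∀ n, 1 ≤ n →
      β n = (((d : ℚ) - 1) / 2) * (((d : ℚ) + 1) ^ (n - 1) - 1) ∧
      α n = β n + (d : ℚ)) :=
  multiplicity_sequences_closed_form_general d c hc α β σ hα1 hβ1 hβrec hαrec hσ2 hσrec
end

section
/- Let d ≥ 2 be an integer and g : ℝ → ℝ the map g(ζ) = ζ² − (d−1)ζ − (d+1). Then for every integer n ≥ 1, the n-fold iterate satisfies g^[n](0) ≠ 0 and g^[n](0) ≠ −2. -/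
/-!
Since `g z - z = (z - (d + 1)) * (z + 1)`, the map `g` pushes every point of `(d + 1, ∞)` further
right, so the orbit of `0` stays in that ray once it enters it. It does so at the second step:
`g 0 = -(d + 1)` and `g (g 0) = (d + 1) * (2 * d - 1) > d + 1` for `d > 1`.
-/

section Decimation

variable {d : ℝ} {g : ℝ → ℝ} (hg : ∀ z : ℝ, g z = z ^ 2 - (d - 1) * z - (d + 1))
include hg

theorem decimation_apply_zero : g 0 = -(d + 1) := by
  rw [hg]; ring

theorem decimation_apply_apply_zero : g (g 0) = (d + 1) * (2 * d - 1) := by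
  rw [decimation_apply_zero hg, hg]; ring

theorem decimation_sub_self (z : ℝ) : g z - z = (z - (d + 1)) * (z + 1) := by
  rw [hg]; ring

theorem decimation_mapsTo_Ioi (hd : -2 ≤ d) : Set.MapsTo g (Set.Ioi (d + 1)) (Set.Ioi (d + 1)) := by
  intro z (hz : d + 1 < z)
  have hgz : 0 < g z - z := by
    rw [decimation_sub_self hg]
    exact mul_pos (by linarith) (by linarith)
  show d + 1 < g z
  linarith

end Decimation

/-- For `d ≥ 2` and the spectral decimation polynomial `g(ζ) = ζ² - (d-1)ζ - (d+1)`, the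
forward orbit of `0` never returns to `0` and never hits `-2`: for every `n ≥ 1`,
`g^[n](0) ≠ 0` and `g^[n](0) ≠ -2`. -/
theorem g_orbit_of_zero_avoids (d : ℕ) (hd : 2 ≤ d)
    (g : ℝ → ℝ) (hg : ∀ z : ℝ, g z = z ^ 2 - ((d : ℝ) - 1) * z - ((d : ℝ) + 1)) :
    ∀ n : ℕ, 1 ≤ n → g^[n] 0 ≠ 0 ∧ g^[n] 0 ≠ -2 := by
  have hd : (2 : ℝ) ≤ d := by exact_mod_cast hd
  intro n hn
  obtain rfl | ⟨k, rfl⟩ : n = 1 ∨ ∃ k, n = k + 2 := by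
    rcases n with _ | _ | k <;> simp_all
  · rw [Function.iterate_one, decimation_apply_zero hg]
    constructor <;> intro h <;> linarith
  · have h2 : (d : ℝ) + 1 < g^[2] 0 := by
      change (d : ℝ) + 1 < g (g 0)
      rw [decimation_apply_apply_zero hg]
      nlinarith
    have hk : (d : ℝ) + 1 < g^[k + 2] 0 := by
      rw [Function.iterate_add_apply]
      exact (decimation_mapsTo_Ioi hg (by linarith)).iterate k h2
    constructor <;> intro h <;> linarith
end

section
/- Let d ≥ 2 be an integer and g : ℝ → ℝ the map g(ζ) = ζ² − (d−1)ζ − (d+1). For i ∈ ℕ define the real preimage sets 𝒜_i = {x : ℝ | g^[i](x) = 0} and ℬ_i = {x : ℝ | g^[i](x) = −2}. Then the family {𝒜_i, ℬ_j | i, j ∈ ℕ} is mutually disjoint; that is: (i) for all i, j ∈ ℕ, 𝒜_i ∩ ℬ_j = ∅; (ii) if i ≠ j then 𝒜_i ∩ 𝒜_j = ∅; (iii) if i ≠ j then ℬ_i ∩ ℬ_j = ∅. -/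
/-!
If `x` lies in `g⁻ⁱ(a)` and `g⁻ʲ(b)` with `i ≤ j`, then `g^[j-i] a = b`; so the generations are
disjoint as soon as the forward orbits of `0` and `-2` avoid each other and neither point is
periodic. Both orbits are explicit: `g z - z = (z - (d+1))(z + 1)`, so `d + 1` is fixed and
`g z > z` beyond it; `-2 ↦ d + 1` stays there, while `0 ↦ -(d+1) ↦ (d+1)(2d-1) > d + 1` then
escapes upwards.
-/

open Function

section IterateFibers

variable {α : Type*} {f : α → α} {a b : α}

theorem iterate_eq_iterate_sub_of_iterate_eq {x : α} {i j : ℕ} (hij : i ≤ j)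
    (hi : f^[i] x = a) : f^[j] x = f^[j - i] a := by
  rw [← hi, ← iterate_add_apply, Nat.sub_add_cancel hij]

theorem setOf_iterate_eq_inter_eq_empty_of_orbits_avoid
    (hab : ∀ k, f^[k] a ≠ b) (hba : ∀ k, f^[k] b ≠ a) (i j : ℕ) :
    {x | f^[i] x = a} ∩ {x | f^[j] x = b} = ∅ := by
  refine Set.eq_empty_iff_forall_notMem.2 fun x ⟨hi, hj⟩ => ?_
  rcases le_total i j with h | h
  · exact hab (j - i) (iterate_eq_iterate_sub_of_iterate_eq h hi ▸ hj)
  · exact hba (i - j) (iterate_eq_iterate_sub_of_iterate_eq h hj ▸ hi)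

theorem setOf_iterate_eq_inter_eq_empty_of_notMem_periodicPts
    (ha : a ∉ periodicPts f) {i j : ℕ} (hij : i ≠ j) :
    {x | f^[i] x = a} ∩ {x | f^[j] x = a} = ∅ := by
  wlog h : i < j generalizing i j
  · rw [Set.inter_comm]
    exact this hij.symm (by omega)
  refine Set.eq_empty_iff_forall_notMem.2 fun x ⟨hi, hj⟩ => ha ?_
  exact mk_mem_periodicPts (Nat.sub_pos_of_lt h)
    ((iterate_eq_iterate_sub_of_iterate_eq h.le hi).symm.trans hj)

end IterateFibers

section ConeDecimation

variable {d : ℝ} {g : ℝ → ℝ} (hg : ∀ z, g z = z ^ 2 - (d - 1) * z - (d + 1))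
include hg

theorem iterate_neg_two_eq {k : ℕ} (hk : 1 ≤ k) : g^[k] (-2) = d + 1 := by
  have hfix : g (d + 1) = d + 1 := by rw [hg]; ring
  induction k, hk using Nat.le_induction with
  | base => rw [iterate_one, hg]; ring
  | succ k _ ih => rw [iterate_succ_apply', ih, hfix]

theorem lt_iterate_zero (hd : 1 < d) {k : ℕ} (hk : 2 ≤ k) : d + 1 < g^[k] 0 := by
  induction k, hk using Nat.le_induction with
  | base => simp only [iterate_succ_apply', iterate_zero_apply, hg]; nlinarith
  | succ k _ ih =>
    have hstep : g (g^[k] 0) - g^[k] 0 = (g^[k] 0 - (d + 1)) * (g^[k] 0 + 1) := by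
      rw [hg]; ring
    rw [iterate_succ_apply']
    nlinarith

theorem iterate_zero_eq_or_lt (hd : 1 < d) {k : ℕ} (hk : 0 < k) :
    g^[k] 0 = -(d + 1) ∨ d + 1 < g^[k] 0 := by
  rcases Nat.lt_or_ge k 2 with hk2 | hk2
  · obtain rfl : k = 1 := by omega
    left; rw [iterate_one, hg]; ring
  · exact Or.inr (lt_iterate_zero hg hd hk2)

theorem iterate_zero_ne_neg_two (hd : 1 < d) (k : ℕ) : g^[k] 0 ≠ -2 := by
  rcases k.eq_zero_or_pos with rfl | hk
  · norm_num
  · intro h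
    rcases iterate_zero_eq_or_lt hg hd hk with h' | h' <;> linarith

theorem iterate_neg_two_ne_zero (hd : 1 < d) (k : ℕ) : g^[k] (-2) ≠ 0 := by
  rcases k.eq_zero_or_pos with rfl | hk
  · norm_num
  · rw [iterate_neg_two_eq hg hk]; linarith

theorem zero_notMem_periodicPts (hd : 1 < d) : (0 : ℝ) ∉ periodicPts g := by
  rintro ⟨k, hk, hper⟩
  have h : g^[k] 0 = 0 := hper.eq
  rcases iterate_zero_eq_or_lt hg hd hk with h' | h' <;> linarith

theorem neg_two_notMem_periodicPts (hd : 1 < d) : (-2 : ℝ) ∉ periodicPts g := by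
  rintro ⟨k, hk, hper⟩
  have : g^[k] (-2) = d + 1 := iterate_neg_two_eq hg hk
  rw [hper.eq] at this
  linarith

end ConeDecimation

/-- Mutual disjointness of the eigenvalue generations of the limiting spectrum: for
`d ≥ 2`, `g(ζ) = ζ² - (d-1)ζ - (d+1)`, `𝒜_i = g^{-i}(0)` and `ℬ_i = g^{-i}(-2)`, the
family `{𝒜_i, ℬ_j}` is mutually disjoint. -/
theorem eigenvalue_generations_disjoint (d : ℕ) (hd : 2 ≤ d)
    (g : ℝ → ℝ) (hg : ∀ z : ℝ, g z = z ^ 2 - ((d : ℝ) - 1) * z - ((d : ℝ) + 1))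
    (A B : ℕ → Set ℝ)
    (hA : ∀ i, A i = {x : ℝ | g^[i] x = 0})
    (hB : ∀ i, B i = {x : ℝ | g^[i] x = -2}) :
    (∀ i j : ℕ, A i ∩ B j = ∅) ∧
    (∀ i j : ℕ, i ≠ j → A i ∩ A j = ∅) ∧
    (∀ i j : ℕ, i ≠ j → B i ∩ B j = ∅) := by
  have hd₁ : 1 < (d : ℝ) := by exact_mod_cast hd
  simp only [hA, hB]
  exact ⟨setOf_iterate_eq_inter_eq_empty_of_orbits_avoid
      (iterate_zero_ne_neg_two hg hd₁) (iterate_neg_two_ne_zero hg hd₁),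
    fun _ _ => setOf_iterate_eq_inter_eq_empty_of_notMem_periodicPts
      (zero_notMem_periodicPts hg hd₁),
    fun _ _ => setOf_iterate_eq_inter_eq_empty_of_notMem_periodicPts
      (neg_two_notMem_periodicPts hg hd₁)⟩
end

section
/- Let d ≥ 2 be an integer and g : ℝ → ℝ the map g(ζ) = ζ² − (d−1)ζ − (d+1). Then for every t ∈ [−2, d+1] and every n ∈ ℕ, the set {x : ℝ | g^[n](x) = t} is finite, has exactly 2^n elements, and is contained in the interval [−2, d+1]. (In particular each of the eigenvalue sets g^{-n}(0) and g^{-n}(−2) has exactly 2^n elements, i.e. all roots of the corresponding generation are simple.) -/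
/-!
Every `y ∈ [-2, d+1]` has exactly two preimages under `g`, namely `(d-1)/2 ± √Δ` with
`Δ = ((d-1)/2)² + (d+1) + y ≥ d - 1 + ((d-1)/2)² > 0`, and both lie in `[-2, d+1]` because
`Δ ≤ ((d+3)/2)²` is equivalent to `y ≤ d + 1`. So `g` is two-to-one from `[-2, d+1]` onto itself,
and by induction on `n` each fibre of `g^[n]` over a point of the interval splits into two disjoint
fibres of `g^[n-1]` over points of the interval.
-/

open Set

theorem Function.ncard_preimage_iterate_singleton_of_two_to_one {α : Type*} {f : α → α}
    {s : Set α} (hf : ∀ y ∈ s, ∃ a ∈ s, ∃ b ∈ s, a ≠ b ∧ f ⁻¹' {y} = {a, b})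
    {t : α} (ht : t ∈ s) (n : ℕ) :
    (f^[n] ⁻¹' {t}).ncard = 2 ^ n ∧ f^[n] ⁻¹' {t} ⊆ s := by
  induction n generalizing t with
  | zero => simpa using ht
  | succ n ih =>
    obtain ⟨a, ha, b, hb, hab, hfib⟩ := hf t ht
    have hsplit : f^[n + 1] ⁻¹' {t} = f^[n] ⁻¹' {a} ∪ f^[n] ⁻¹' {b} := by
      rw [Function.iterate_succ', preimage_comp, hfib, insert_eq, preimage_union]
    have hdisj : Disjoint (f^[n] ⁻¹' {a}) (f^[n] ⁻¹' {b}) :=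
      (disjoint_singleton.2 hab).preimage _
    obtain ⟨hca, hsa⟩ := ih ha
    obtain ⟨hcb, hsb⟩ := ih hb
    have hfin : ∀ {c : α}, (f^[n] ⁻¹' {c}).ncard = 2 ^ n → (f^[n] ⁻¹' {c}).Finite :=
      fun h => finite_of_ncard_ne_zero (h.trans_ne (by positivity))
    rw [hsplit, ncard_union_eq hdisj (hfin hca) (hfin hcb), hca, hcb]
    exact ⟨by ring, union_subset hsa hsb⟩

theorem preimage_quadratic_singleton_eq_pair {c : ℝ} (hc : 1 < c) {y : ℝ}
    (hy : y ∈ Icc (-2) (c + 1)) :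
    ∃ a ∈ Icc (-2) (c + 1), ∃ b ∈ Icc (-2) (c + 1), a ≠ b ∧
      (fun z : ℝ => z ^ 2 - (c - 1) * z - (c + 1)) ⁻¹' {y} = {a, b} := by
  obtain ⟨hy₁, hy₂⟩ := hy
  set Δ := ((c - 1) / 2) ^ 2 + (c + 1) + y with hΔ
  have hΔ_pos : 0 < Δ := by nlinarith
  have hsq : √Δ ^ 2 = Δ := Real.sq_sqrt hΔ_pos.le
  have hsqrt_pos : 0 < √Δ := Real.sqrt_pos.2 hΔ_pos
  have hsqrt_le : √Δ ≤ (c + 3) / 2 :=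
    Real.sqrt_le_iff.2 ⟨by linarith, by nlinarith⟩
  refine ⟨(c - 1) / 2 + √Δ, ⟨by linarith, by linarith⟩,
    (c - 1) / 2 - √Δ, ⟨by linarith, by linarith⟩, by linarith, ?_⟩
  ext z
  have hfactor : z ^ 2 - (c - 1) * z - (c + 1) - y =
      (z - ((c - 1) / 2 + √Δ)) * (z - ((c - 1) / 2 - √Δ)) := by
    linear_combination hsq + hΔ
  simp only [mem_preimage, mem_singleton_iff, mem_insert_iff, ← sub_eq_zero (b := y), hfactor,
    mul_eq_zero, sub_eq_zero]

/-- For `d ≥ 2`, `g(ζ) = ζ² - (d-1)ζ - (d+1)` and `t ∈ [-2, d+1]`, the set of real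
solutions of `g^[n](x) = t` is finite, has exactly `2^n` elements, and is contained in
`[-2, d+1]`. In particular each eigenvalue generation `g^{-n}(0)`, `g^{-n}(-2)` consists
of exactly `2^n` simple roots. -/
theorem preimage_iterate_card (d : ℕ) (hd : 2 ≤ d)
    (g : ℝ → ℝ) (hg : ∀ z : ℝ, g z = z ^ 2 - ((d : ℝ) - 1) * z - ((d : ℝ) + 1))
    (t : ℝ) (ht : t ∈ Set.Icc (-2 : ℝ) ((d : ℝ) + 1)) (n : ℕ) :
    {x : ℝ | g^[n] x = t}.Finite ∧
    {x : ℝ | g^[n] x = t}.ncard = 2 ^ n ∧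
    {x : ℝ | g^[n] x = t} ⊆ Set.Icc (-2 : ℝ) ((d : ℝ) + 1) := by
  obtain rfl : g = fun z : ℝ => z ^ 2 - ((d : ℝ) - 1) * z - ((d : ℝ) + 1) := funext hg
  have hd' : (1 : ℝ) < d := by exact_mod_cast hd
  obtain ⟨hcard, hsub⟩ := Function.ncard_preimage_iterate_singleton_of_two_to_one
    (fun y hy => preimage_quadratic_singleton_eq_pair hd' hy) ht n
  exact ⟨finite_of_ncard_ne_zero (hcard.trans_ne (by positivity)), hcard, hsub⟩
end
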